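/- arXiv:2210.15782 — 2 statements merged into one kernel-verified Lean document; each statement's English description precedes it below -/
import Mathlib

section
/- For k = 2, the infimum over β ∈ [1/2, 1) of (k − (1−β)·min(3/(2−β), 3/(3β−1)))/(β + k/2 − 1) equals 1 + √3/2 and is attained at β = √3 − 1. -/
/-!
With `c = 1 + √3/2`, clearing denominators turns `2 - (1 - β) · 3/(2 - β) - c β` into
`c (β - (√3 - 1))² / (2 - β)`, because `c (√3 - 1)² = 1`. Since `min` only decreases the
subtracted term, this bounds the quotient below by `c` on all of `[1/2, 1)`; at `β = √3 - 1 ≤ 3/4`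
the minimum is `3/(2 - β)` and the square vanishes, so the bound is attained.
-/

open Real

lemma two_sub_mul_three_div_sub_mul_eq {β : ℝ} (hβ : β ≠ 2) :
    2 - (1 - β) * (3 / (2 - β)) - (1 + √3 / 2) * β =
      (1 + √3 / 2) * (β - (√3 - 1)) ^ 2 / (2 - β) := by
  have h3 : √3 ^ 2 = 3 := sq_sqrt (by norm_num)
  have hβ' : 2 - β ≠ 0 := sub_ne_zero.mpr (Ne.symm hβ)
  field_simp
  linear_combination (2 * β - √3) * h3

lemma mul_le_two_sub_mul_three_div {β : ℝ} (hβ : β < 2) :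
    (1 + √3 / 2) * β ≤ 2 - (1 - β) * (3 / (2 - β)) := by
  have hnonneg : 0 ≤ (1 + √3 / 2) * (β - (√3 - 1)) ^ 2 / (2 - β) :=
    div_nonneg (by positivity) (by linarith)
  linarith [two_sub_mul_three_div_sub_mul_eq hβ.ne]

lemma two_sub_mul_three_div_at_sqrt_three_sub_one (hs : √3 - 1 ≠ 2) :
    2 - (1 - (√3 - 1)) * (3 / (2 - (√3 - 1))) = (1 + √3 / 2) * (√3 - 1) := by
  have h := two_sub_mul_three_div_sub_mul_eq hs
  rw [sub_self, zero_pow two_ne_zero, mul_zero, zero_div] at h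
  linarith

lemma min_three_div_eq_left {β : ℝ} (h₁ : 1 / 3 < β) (h₂ : β ≤ 3 / 4) :
    min (3 / (2 - β)) (3 / (3 * β - 1)) = 3 / (2 - β) :=
  min_eq_left (div_le_div_of_nonneg_left (by norm_num) (by linarith) (by linarith))

theorem inf_second_exponent_weight_two :
    sInf {y : ℝ | ∃ β : ℝ, 1 / 2 ≤ β ∧ β < 1 ∧
        y = ((2 : ℝ) - (1 - β) * min (3 / (2 - β)) (3 / (3 * β - 1))) / (β + 2 / 2 - 1)} =
      1 + Real.sqrt 3 / 2 ∧
    ((2 : ℝ) - (1 - (Real.sqrt 3 - 1)) *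
        min (3 / (2 - (Real.sqrt 3 - 1))) (3 / (3 * (Real.sqrt 3 - 1) - 1))) /
      ((Real.sqrt 3 - 1) + 2 / 2 - 1) = 1 + Real.sqrt 3 / 2 := by
  have h3 : √3 ^ 2 = 3 := sq_sqrt (by norm_num)
  have hlo : 3 / 2 < √3 := by nlinarith [sqrt_nonneg 3]
  have hhi : √3 < 7 / 4 := by nlinarith [sqrt_nonneg 3]
  have hval : (2 - (1 - (√3 - 1)) * min (3 / (2 - (√3 - 1))) (3 / (3 * (√3 - 1) - 1))) /
      ((√3 - 1) + 2 / 2 - 1) = 1 + √3 / 2 := by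
    rw [min_three_div_eq_left (by linarith) (by linarith),
      two_sub_mul_three_div_at_sqrt_three_sub_one (by linarith),
      show √3 - 1 + 2 / 2 - 1 = √3 - 1 by ring, mul_div_cancel_right₀ _ (by linarith)]
  refine ⟨IsLeast.csInf_eq ⟨⟨√3 - 1, by linarith, by linarith, hval.symm⟩, ?_⟩, hval⟩
  rintro y ⟨β, hβ₁, hβ₂, rfl⟩
  rw [show β + 2 / 2 - 1 = β by ring, le_div_iff₀ (by linarith)]
  calc (1 + √3 / 2) * β ≤ 2 - (1 - β) * (3 / (2 - β)) := mul_le_two_sub_mul_three_div (by linarith)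
    _ ≤ 2 - (1 - β) * min (3 / (2 - β)) (3 / (3 * β - 1)) := by
      gcongr
      · exact min_le_left _ _
end

section
/- For every even integer k ≥ 4, the infimum over β ∈ [1/2, 1) of (k − (1−β)·min(3/(2−β), 3/(3β−1)))/(β + k/2 − 1) equals 2(1 − 1/(10k−5)) and is attained at β = 3/4. -/
/-!
On `[1/2, 3/4]` the minimum is `3/(2 - β)`, on `[3/4, 1)` it is `3/(3β - 1)`. On each branch the
difference between the ratio and `2(1 - 1/(10k - 5))` is a rational function whose numerator
factors as `(3/4 - β)` times an affine function of `β`, which keeps a constant sign on the branch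
as soon as `k ≥ 3`. Hence the ratio is minimised at `β = 3/4`, where it equals `2(1 - 1/(10k - 5))`.
-/

namespace SecondExponent

noncomputable def ratio (K β : ℝ) : ℝ :=
  (K - (1 - β) * min (3 / (2 - β)) (3 / (3 * β - 1))) / (β + K / 2 - 1)

lemma min_eq_left_of_le_three_fourths {β : ℝ} (h₁ : 1 / 3 < β) (h₂ : β ≤ 3 / 4) :
    min (3 / (2 - β)) (3 / (3 * β - 1)) = 3 / (2 - β) :=
  min_eq_left <| div_le_div_of_nonneg_left (by norm_num) (by linarith) (by linarith)

lemma min_eq_right_of_three_fourths_le {β : ℝ} (h₁ : 3 / 4 ≤ β) (h₂ : β < 2) :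
    min (3 / (2 - β)) (3 / (3 * β - 1)) = 3 / (3 * β - 1) :=
  min_eq_right <| div_le_div_of_nonneg_left (by norm_num) (by linarith) (by linarith)

variable {K β : ℝ}

lemma ratio_sub_of_le_three_fourths (hE : 10 * K - 5 ≠ 0) (hD : β + K / 2 - 1 ≠ 0)
    (h₁ : 1 / 3 < β) (h₂ : β ≤ 3 / 4) :
    ratio K β - 2 * (1 - 1 / (10 * K - 5)) =
      (3 / 4 - β) * (16 * K - 12 - (20 * K - 12) * β) /
        ((10 * K - 5) * (2 - β) * (β + K / 2 - 1)) := by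
  -- `field_simp` only recognises nonzero denominators stated in its own normal form.
  have hE' : K * 10 - 5 ≠ 0 := by contrapose! hE; linarith
  have hD' : β * 2 + K - 2 ≠ 0 := by contrapose! hD; linarith
  have h2β : 2 - β ≠ 0 := by linarith
  rw [ratio, min_eq_left_of_le_three_fourths h₁ h₂]
  field_simp
  ring

lemma ratio_sub_of_three_fourths_le (hE : 10 * K - 5 ≠ 0) (hD : β + K / 2 - 1 ≠ 0)
    (h₁ : 3 / 4 ≤ β) (h₂ : β < 2) :
    ratio K β - 2 * (1 - 1 / (10 * K - 5)) =
      (β - 3 / 4) * (68 * K - 36 - (60 * K - 36) * β) /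
        ((10 * K - 5) * (3 * β - 1) * (β + K / 2 - 1)) := by
  have hE' : K * 10 - 5 ≠ 0 := by contrapose! hE; linarith
  have hD' : β * 2 + K - 2 ≠ 0 := by contrapose! hD; linarith
  have h3β : β * 3 - 1 ≠ 0 := by linarith
  rw [ratio, min_eq_right_of_three_fourths_le h₁ h₂]
  field_simp
  ring

lemma ratio_three_fourths (hK : K ≠ 1 / 2) :
    ratio K (3 / 4) = 2 * (1 - 1 / (10 * K - 5)) := by
  rw [← sub_eq_zero, ratio_sub_of_le_three_fourths (by contrapose! hK; linarith)
    (by contrapose! hK; linarith) (by norm_num) le_rfl]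
  simp

lemma le_ratio (hK : 3 ≤ K) (h₁ : 1 / 2 ≤ β) (h₂ : β < 1) :
    2 * (1 - 1 / (10 * K - 5)) ≤ ratio K β := by
  have hE : 0 < 10 * K - 5 := by linarith
  have hD : 0 < β + K / 2 - 1 := by linarith
  rw [← sub_nonneg]
  rcases le_total β (3 / 4) with hβ | hβ
  · rw [ratio_sub_of_le_three_fourths hE.ne' hD.ne' (by linarith) hβ]
    have hlin : 0 ≤ 16 * K - 12 - (20 * K - 12) * β := by nlinarith
    exact div_nonneg (mul_nonneg (by linarith) hlin)
      (mul_nonneg (mul_nonneg hE.le (by linarith)) hD.le)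
  · rw [ratio_sub_of_three_fourths_le hE.ne' hD.ne' hβ (by linarith)]
    have hlin : 0 ≤ 68 * K - 36 - (60 * K - 36) * β := by nlinarith
    exact div_nonneg (mul_nonneg (by linarith) hlin)
      (mul_nonneg (mul_nonneg hE.le (by linarith)) hD.le)

lemma isLeast_ratio (hK : 3 ≤ K) :
    IsLeast {y | ∃ β : ℝ, 1 / 2 ≤ β ∧ β < 1 ∧ y = ratio K β} (2 * (1 - 1 / (10 * K - 5))) :=
  ⟨⟨3 / 4, by norm_num, by norm_num, (ratio_three_fourths (by linarith)).symm⟩,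
    fun _ ⟨_, h₁, h₂, hy⟩ => hy ▸ le_ratio hK h₁ h₂⟩

end SecondExponent

open SecondExponent in
theorem inf_second_exponent_higher_weight_general (k : ℕ) (hk4 : 4 ≤ k) :
    sInf {y : ℝ | ∃ β : ℝ, 1 / 2 ≤ β ∧ β < 1 ∧
        y = ((k : ℝ) - (1 - β) * min (3 / (2 - β)) (3 / (3 * β - 1))) / (β + (k : ℝ) / 2 - 1)} =
      2 * (1 - 1 / (10 * (k : ℝ) - 5)) ∧
    ((k : ℝ) - (1 - (3 / 4 : ℝ)) * min (3 / (2 - (3 / 4 : ℝ))) (3 / (3 * (3 / 4 : ℝ) - 1))) /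
        ((3 / 4 : ℝ) + (k : ℝ) / 2 - 1) = 2 * (1 - 1 / (10 * (k : ℝ) - 5)) := by
  have hK : (3 : ℝ) ≤ k := by exact_mod_cast (by omega : 3 ≤ k)
  exact ⟨(isLeast_ratio hK).csInf_eq, ratio_three_fourths (by linarith)⟩

theorem inf_second_exponent_higher_weight (k : ℕ) (hk : Even k) (hk4 : 4 ≤ k) :
    sInf {y : ℝ | ∃ β : ℝ, 1 / 2 ≤ β ∧ β < 1 ∧
        y = ((k : ℝ) - (1 - β) * min (3 / (2 - β)) (3 / (3 * β - 1))) / (β + (k : ℝ) / 2 - 1)} =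
      2 * (1 - 1 / (10 * (k : ℝ) - 5)) ∧
    ((k : ℝ) - (1 - (3 / 4 : ℝ)) * min (3 / (2 - (3 / 4 : ℝ))) (3 / (3 * (3 / 4 : ℝ) - 1))) /
        ((3 / 4 : ℝ) + (k : ℝ) / 2 - 1) = 2 * (1 - 1 / (10 * (k : ℝ) - 5)) :=
  inf_second_exponent_higher_weight_general k hk4
end
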